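/- There is no vector w = (w₁,w₂,w₃,w₄,w₅,w₆) ∈ ℝ⁶ that simultaneously satisfies: w₁ = 0, w₆ = 0, (2−√2)w₂ + (−2+2√2)w₃ + (2−√2)w₅ = 0, 2w₂ − 2w₅ = 1, (−5+2√2)w₂ + (4−4√2)w₃ + (3−2√2)w₄ + (−7+6√2)w₅ = −π/4, c₆(w) = 0, and c₇(w) = 0. -/
import Mathlib


noncomputable section

/-- The linear form `c₆` of the paper, a coefficient of the leading bias term of the
Euler-characteristic estimator. -/
def c6 (w : Fin 6 → ℝ) : ℝ :=
  (1 / 6) * (w 0 + (2 * Real.sqrt 2 - 2) * w 1 + (2 - 4 * Real.sqrt 2) * w 2 +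
    (2 * Real.sqrt 2 - 2) * w 4 + w 5)

/-- The linear form `c₇` of the paper, a coefficient of the leading bias term of the
Euler-characteristic estimator. -/
def c7 (w : Fin 6 → ℝ) : ℝ :=
  2 * (2 * w 0 + (-6 + Real.sqrt 2) * w 1 + (4 - 2 * Real.sqrt 2) * w 2 +
    (2 - Real.sqrt 2) * w 3 + (-2 + 3 * Real.sqrt 2) * w 4 - Real.sqrt 2 * w 5)

/-- No choice of weights makes the Euler-characteristic estimator asymptotically
unbiased with vanishing leading bias: the linear system from Theorem 2 together with
`c₆(w) = c₇(w) = 0` has no solution. -/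
theorem stmt_7 :
    ¬ ∃ w : Fin 6 → ℝ,
        w 0 = 0 ∧ w 5 = 0 ∧
        (2 - Real.sqrt 2) * w 1 + (-2 + 2 * Real.sqrt 2) * w 2 +
            (2 - Real.sqrt 2) * w 4 = 0 ∧
        2 * w 1 - 2 * w 4 = 1 ∧
        (-5 + 2 * Real.sqrt 2) * w 1 + (4 - 4 * Real.sqrt 2) * w 2 +
            (3 - 2 * Real.sqrt 2) * w 3 + (-7 + 6 * Real.sqrt 2) * w 4 = -(Real.pi / 4) ∧
        c6 w = 0 ∧ c7 w = 0 := by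
  rintro ⟨w, h0, h5, h3, h4, he5, h6, h7⟩
  simp only [c6, c7, h0, h5] at h6 h7
  set s := Real.sqrt 2 with hsdef
  have hss : s * s = 2 := Real.mul_self_sqrt (by norm_num)
  have hspos : 0 < s := Real.sqrt_pos.mpr (by norm_num)
  have h2s : (0 : ℝ) < 2 - s := by nlinarith
  -- eliminate w 2
  have h1 : (2 * s) * w 2 = 0 := by linear_combination (2*s - 2) * h3 - (12 - 6*s) * h6
  have hw2 : w 2 = 0 := (mul_eq_zero.mp h1).resolve_left (by positivity)
  have h3' : (2 - s) * (w 1 + w 4) = 0 := by linear_combination h3 + (2 - 2*s) * hw2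
  have hu : w 1 + w 4 = 0 := (mul_eq_zero.mp h3').resolve_left h2s.ne'
  have hw1 : w 1 = 1/4 := by linarith
  have hw4 : w 4 = -(1/4) := by linarith
  rw [hw1, hw2, hw4] at h7 he5
  have hpi' : (2 - s) * Real.pi = 12 * s - 16 := by
    linear_combination 4 * (2 - s) * he5 + (4*s - 6) * h7
  nlinarith [hpi', Real.pi_gt_three, hss, h2s,
    mul_lt_mul_of_pos_left Real.pi_gt_three h2s]
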